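/- arXiv:1801.08386 — 4 statements merged into one kernel-verified Lean document; each statement's English description precedes it below -/
import Mathlib

section
/- Let ζ ∈ ℂ with Im ζ > 0. Define λ = (ζ + ζ^{-1})/2 and z = (ζ − ζ^{-1})/2. Then λ² = 1 + z², Im z > 0, and λ does not belong to the set (−∞, −1] ∪ [1, ∞) of real numbers of absolute value at least 1. -/
/-!
Writing `λ = (ζ + ζ⁻¹)/2` and `z = (ζ - ζ⁻¹)/2`, the identity `λ² - z² = 1` is algebra.
Inversion maps the upper half-plane to the lower one, so `Im z = (Im ζ - Im ζ⁻¹)/2 > 0`.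
Finally, if `λ = x` is real, then `ζ` solves `ζ² - 2xζ + 1 = 0`, i.e. `(ζ - x)² = x² - 1`;
for `|x| ≥ 1` the right-hand side is a nonnegative real, so `ζ` is real.
-/

namespace Complex

lemma im_inv_neg_of_im_pos {ζ : ℂ} (hζ : 0 < ζ.im) : ζ⁻¹.im < 0 := by
  have hnormSq : 0 < normSq ζ := normSq_pos.mpr (ne_of_apply_ne im hζ.ne')
  rw [inv_im]
  exact div_neg_of_neg_of_pos (neg_neg_of_pos hζ) hnormSq

lemma im_eq_zero_of_sq_eq_ofReal_of_nonneg {w : ℂ} {c : ℝ} (hw : w ^ 2 = c) (hc : 0 ≤ c) :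
    w.im = 0 := by
  have hre : w.re ^ 2 - w.im ^ 2 = c := by simpa [sq] using congrArg re hw
  have him : w.re * w.im + w.im * w.re = 0 := by simpa [sq] using congrArg im hw
  rcases mul_eq_zero.mp (by linarith : w.re * w.im = 0) with h | h
  · have hre0 : w.re = 0 := by linarith
    nlinarith [sq_nonneg w.im]
  · exact h

lemma im_eq_zero_of_add_inv_div_two_eq_ofReal {ζ : ℂ} {x : ℝ} (hζ : ζ ≠ 0)
    (h : (ζ + ζ⁻¹) / 2 = x) (hx : 1 ≤ x ^ 2) : ζ.im = 0 := by
  have hsq : (ζ - x) ^ 2 = ((x ^ 2 - 1 : ℝ) : ℂ) := by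
    push_cast
    rw [← h]
    field_simp
    ring
  simpa using im_eq_zero_of_sq_eq_ofReal_of_nonneg hsq (by linarith)

end Complex

theorem stmt_1 (ζ : ℂ) (hζ : 0 < ζ.im) :
    ((ζ + ζ⁻¹) / 2) ^ 2 = 1 + ((ζ - ζ⁻¹) / 2) ^ 2 ∧
    0 < ((ζ - ζ⁻¹) / 2).im ∧
    ¬ ∃ x : ℝ, (x ≤ -1 ∨ 1 ≤ x) ∧ (ζ + ζ⁻¹) / 2 = (x : ℂ) := by
  have hζ0 : ζ ≠ 0 := ne_of_apply_ne Complex.im hζ.ne'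
  refine ⟨by field_simp; ring, ?_, ?_⟩
  · have hinv := Complex.im_inv_neg_of_im_pos hζ
    simp only [Complex.div_ofNat_im, Complex.sub_im]
    linarith
  · rintro ⟨x, hx, h⟩
    have hx2 : 1 ≤ x ^ 2 := by rcases hx with hx | hx <;> nlinarith
    exact hζ.ne' (Complex.im_eq_zero_of_add_inv_div_two_eq_ofReal hζ0 h hx2)
end

section
/- Let λ, z, ζ ∈ ℂ with λ² = 1 + z² and ζ = λ + z, let q ∈ ℂ with |q|² ≠ ζ², and define for μ ∈ ℂ the 2×2 complex matrix M(μ) with first row (−iμ, q) and second row (q̄, iμ). Then (|q|² − ζ²)^{-1} · [ M(ζ)·M(λ) − (|q|² − 1)·I ] · M(ζ) equals the diagonal matrix diag(−iz, iz). -/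
/-!
Write `M(μ) = -iμσ₃ + Q` with `Q` off-diagonal, so that `Q² = |q|²` and `σ₃Q = -Qσ₃`. Then
`M(ζ)M(λ) - (|q|² - 1) = -izσ₃ M(ζ)`, because `ζ(ζ - 2λ) = z² - λ² = -1`, and `M(ζ)² = |q|² - ζ²`
is scalar; multiplying the first identity by `M(ζ)` on the right gives the claim.
-/

open Complex

/-- `M(μ)` of the Lax equation, with the off-diagonal entries `q`, `r` left independent. -/
def laxMatrix (q r μ : ℂ) : Matrix (Fin 2) (Fin 2) ℂ := !![-(I * μ), q; r, I * μ]

lemma laxMatrix_mul_self (q r μ : ℂ) :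
    laxMatrix q r μ * laxMatrix q r μ = (q * r - μ ^ 2) • (1 : Matrix (Fin 2) (Fin 2) ℂ) := by
  ext i j
  fin_cases i <;> fin_cases j <;> simp [laxMatrix] <;> ring_nf <;> simp only [I_sq] <;> ring

/-- Here `laxMatrix 0 0 (a - b)` is `-i(a - b)σ₃`. -/
lemma laxMatrix_mul_laxMatrix (q r a b : ℂ) :
    laxMatrix q r a * laxMatrix q r b =
      (q * r + a * (a - 2 * b)) • (1 : Matrix (Fin 2) (Fin 2) ℂ) +
        laxMatrix 0 0 (a - b) * laxMatrix q r a := by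
  ext i j
  fin_cases i <;> fin_cases j <;> simp [laxMatrix] <;> ring_nf <;> simp only [I_sq] <;> ring

lemma laxMatrix_mul_laxMatrix_sub_smul_one (q r lam z : ℂ) (h : lam ^ 2 = 1 + z ^ 2) :
    laxMatrix q r (lam + z) * laxMatrix q r lam - (q * r - 1) • (1 : Matrix (Fin 2) (Fin 2) ℂ) =
      laxMatrix 0 0 z * laxMatrix q r (lam + z) := by
  have hcoeff : q * r + (lam + z) * (lam + z - 2 * lam) = q * r - 1 := by
    linear_combination -h
  rw [laxMatrix_mul_laxMatrix, hcoeff, add_sub_cancel_left, add_sub_cancel_left]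

open Matrix in
theorem stmt_3 (lam z ζ q : ℂ) (h1 : lam ^ 2 = 1 + z ^ 2) (h2 : ζ = lam + z)
    (hq : (Complex.normSq q : ℂ) ≠ ζ ^ 2)
    (M : ℂ → Matrix (Fin 2) (Fin 2) ℂ)
    (hM : ∀ μ : ℂ, M μ = !![-(Complex.I * μ), q; (starRingEnd ℂ) q, Complex.I * μ]) :
    ((Complex.normSq q : ℂ) - ζ ^ 2)⁻¹ •
        (M ζ * M lam - ((Complex.normSq q : ℂ) - 1) • (1 : Matrix (Fin 2) (Fin 2) ℂ)) * M ζ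
      = !![-(Complex.I * z), 0; 0, Complex.I * z] := by
  have hM' : M = laxMatrix q (starRingEnd ℂ q) := funext hM
  have hnormSq : (Complex.normSq q : ℂ) = q * starRingEnd ℂ q := (mul_conj q).symm
  subst hM' h2
  rw [hnormSq, laxMatrix_mul_laxMatrix_sub_smul_one _ _ _ _ h1, Matrix.smul_mul, Matrix.mul_assoc,
    laxMatrix_mul_self, Matrix.mul_smul, Matrix.mul_one, smul_smul,
    inv_mul_cancel₀ (sub_ne_zero.mpr (hnormSq ▸ hq)), one_smul]
  simp [laxMatrix]
end

section
/- Let w₀ ∈ L²(ℝ; ℝ) be locally integrable and let w : ℝ → ℝ be differentiable with w'(x) = (2 − 2 w₀(x)) w(x) for all x. If w ∈ L²(ℝ) then w is identically zero. -/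
/-!
Where `w ≠ 0`, `log |w|` has derivative `2 - 2 w₀`, and `2 - 2y ≥ -2y²` gives
`log |w b| - log |w a| ≥ -2 ‖w₀‖₂²` for `a ≤ b`. Hence, once `w a ≠ 0`, `|w|` stays above
`|w a| exp (-2 ‖w₀‖₂²)` up to its first zero to the right of `a`, so there is no such zero, and
`|w|` is bounded below by a positive constant on `[a, ∞)`, which is incompatible with `w ∈ L²`.
-/

open MeasureTheory Set Real Filter

lemma log_sub_log_eq_intervalIntegral_of_hasDerivAt_mul {f g : ℝ → ℝ} {a b : ℝ}
    (hf : ∀ x ∈ uIcc a b, HasDerivAt f (g x * f x) x) (hne : ∀ x ∈ uIcc a b, f x ≠ 0)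
    (hg : IntervalIntegrable g volume a b) :
    log (f b) - log (f a) = ∫ x in a..b, g x := by
  refine (intervalIntegral.integral_eq_sub_of_hasDerivAt (f := fun x => log (f x))
    (fun x hx => ?_) hg).symm
  simpa [mul_div_cancel_right₀ _ (hne x hx)] using (hf x hx).log (hne x hx)

lemma neg_two_mul_integral_sq_le_intervalIntegral {w₀ : ℝ → ℝ} (hw₀ : MemLp w₀ 2 volume)
    {a b : ℝ} (hab : a ≤ b) :
    -2 * ∫ x, w₀ x ^ 2 ≤ ∫ x in a..b, (2 - 2 * w₀ x) := by
  have hsq : Integrable (fun x => w₀ x ^ 2) volume := hw₀.integrable_sq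
  have hw₀int : IntervalIntegrable w₀ volume a b :=
    ((hw₀.locallyIntegrable one_le_two).integrableOn_isCompact isCompact_uIcc).intervalIntegrable
  calc -2 * ∫ x, w₀ x ^ 2 ≤ -2 * ∫ x in a..b, w₀ x ^ 2 := by
        rw [intervalIntegral.integral_of_le hab]
        exact mul_le_mul_of_nonpos_left
          (setIntegral_le_integral hsq (Eventually.of_forall fun x => sq_nonneg _)) (by norm_num)
    _ = ∫ x in a..b, -2 * w₀ x ^ 2 := (intervalIntegral.integral_const_mul _ _).symm
    _ ≤ ∫ x in a..b, (2 - 2 * w₀ x) := by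
        refine intervalIntegral.integral_mono_on hab (hsq.intervalIntegrable.const_mul _)
          (intervalIntegrable_const.sub (hw₀int.const_mul 2)) fun x _ => ?_
        nlinarith [sq_nonneg (2 * w₀ x - 1)]

lemma not_memLp_of_le_abs_on_Ici {f : ℝ → ℝ} {p : ENNReal} (hp₀ : p ≠ 0) (hp : p ≠ ⊤)
    {a c : ℝ} (hc : 0 < c) (hf : ∀ x ∈ Ici a, c ≤ |f x|) : ¬ MemLp f p volume := by
  intro hmem
  have hfin := hmem.meas_ge_lt_top' hp₀ hp (ENNReal.ofReal_pos.2 hc).ne'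
  have hsub : Ici a ⊆ {x | ENNReal.ofReal c ≤ ‖f x‖₊} := fun x hx => by
    simpa [← ofReal_norm] using ENNReal.ofReal_le_ofReal (hf x hx)
  simpa using (measure_mono hsub).trans_lt hfin

lemma Continuous.exists_mem_Ioc_eq_zero_forall_Ico_ne_zero {f : ℝ → ℝ} (hf : Continuous f)
    {a b : ℝ} (hab : a ≤ b) (ha : f a ≠ 0) (hb : f b = 0) :
    ∃ z ∈ Ioc a b, f z = 0 ∧ ∀ t ∈ Ico a z, f t ≠ 0 := by
  set S := Icc a b ∩ f ⁻¹' {0}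
  have hS : IsClosed S := isClosed_Icc.inter (isClosed_singleton.preimage hf)
  have hbdd : BddBelow S := ⟨a, fun t ht => ht.1.1⟩
  obtain ⟨⟨hza, hzb⟩, hz⟩ := hS.csInf_mem ⟨b, ⟨hab, le_rfl⟩, hb⟩ hbdd
  refine ⟨sInf S, ⟨lt_of_le_of_ne hza fun h => ha (h ▸ hz), hzb⟩, hz, fun t ht h0 => ?_⟩
  exact ht.2.not_ge (csInf_le hbdd ⟨⟨ht.1, ht.2.le.trans hzb⟩, h0⟩)

section

variable {w₀ w : ℝ → ℝ}

lemma abs_mul_exp_le_abs_of_forall_ne_zero (hw₀ : MemLp w₀ 2 volume)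
    (hderiv : ∀ x, HasDerivAt w ((2 - 2 * w₀ x) * w x) x) {a b : ℝ} (hab : a ≤ b)
    (hne : ∀ x ∈ Icc a b, w x ≠ 0) :
    |w a| * exp (-2 * ∫ x, w₀ x ^ 2) ≤ |w b| := by
  have hw₀int : IntervalIntegrable w₀ volume a b :=
    ((hw₀.locallyIntegrable one_le_two).integrableOn_isCompact isCompact_uIcc).intervalIntegrable
  have hlog := log_sub_log_eq_intervalIntegral_of_hasDerivAt_mul (fun x _ => hderiv x)
    (by rwa [uIcc_of_le hab]) (intervalIntegrable_const.sub (hw₀int.const_mul 2))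
  rw [← exp_log_eq_abs (hne a ⟨le_rfl, hab⟩), ← exp_log_eq_abs (hne b ⟨hab, le_rfl⟩), ← exp_add]
  exact exp_le_exp.2 (by linarith [neg_two_mul_integral_sq_le_intervalIntegral hw₀ hab])

lemma abs_mul_exp_le_abs_of_ne_zero (hw₀ : MemLp w₀ 2 volume)
    (hderiv : ∀ x, HasDerivAt w ((2 - 2 * w₀ x) * w x) x) {a : ℝ} (ha : w a ≠ 0) :
    ∀ b ∈ Ici a, |w a| * exp (-2 * ∫ x, w₀ x ^ 2) ≤ |w b| := by
  have hcont : Continuous w := continuous_iff_continuousAt.2 fun x => (hderiv x).continuousAt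
  suffices hne : ∀ b ∈ Ici a, w b ≠ 0 from fun b hb =>
    abs_mul_exp_le_abs_of_forall_ne_zero hw₀ hderiv hb fun x hx => hne x hx.1
  intro b hab hb
  obtain ⟨z, ⟨haz, -⟩, hz, hne⟩ :=
    hcont.exists_mem_Ioc_eq_zero_forall_Ico_ne_zero hab ha hb
  have hbound : Ico a z ⊆ {t | |w a| * exp (-2 * ∫ x, w₀ x ^ 2) ≤ |w t|} := fun t ht =>
    abs_mul_exp_le_abs_of_forall_ne_zero hw₀ hderiv ht.1
      fun x hx => hne x ⟨hx.1, hx.2.trans_lt ht.2⟩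
  have hz_mem := closure_minimal hbound (isClosed_le continuous_const hcont.abs)
    (by rw [closure_Ico haz.ne]; exact right_mem_Icc.2 haz.le)
  have : 0 < |w a| * exp (-2 * ∫ x, w₀ x ^ 2) := mul_pos (abs_pos.2 ha) (exp_pos _)
  simp only [mem_ofPred_eq, hz, abs_zero] at hz_mem
  linarith

end

theorem stmt_9_general (w₀ w : ℝ → ℝ)
    (hw₀ : MeasureTheory.MemLp w₀ 2 MeasureTheory.volume)
    (hderiv : ∀ x, HasDerivAt w ((2 - 2 * w₀ x) * w x) x)
    (hw : MeasureTheory.MemLp w 2 MeasureTheory.volume) :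
    ∀ x, w x = 0 := by
  intro x
  by_contra hx
  exact not_memLp_of_le_abs_on_Ici two_ne_zero ENNReal.ofNat_ne_top
    (mul_pos (abs_pos.2 hx) (exp_pos _)) (abs_mul_exp_le_abs_of_ne_zero hw₀ hderiv hx) hw

theorem stmt_9 (w₀ w : ℝ → ℝ)
    (hw₀ : MeasureTheory.MemLp w₀ 2 MeasureTheory.volume)
    (hw₀loc : MeasureTheory.LocallyIntegrable w₀ MeasureTheory.volume)
    (hderiv : ∀ x, HasDerivAt w ((2 - 2 * w₀ x) * w x) x)
    (hw : MeasureTheory.MemLp w 2 MeasureTheory.volume) :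
    ∀ x, w x = 0 :=
  stmt_9_general w₀ w hw₀ hderiv hw
end

section
/- Let z ∈ ℂ with Im z > 0 and let g, h : ℝ → ℂ be Schwartz functions. Then ∫∫_{x<y} e^{2iz(y−x)} g(y) h(x) dx dy = (i/(2z)) · ( ∫_ℝ g(x) h(x) dx − ∫∫_{x<y} e^{2iz(y−x)} g(y) h'(x) dx dy ). -/
/-!
Write `c = 2iz`, so that `Re c < 0` and the kernel `e^{c(y-x)}` has modulus at most one on
`x < y`. By Fubini the double integral is `∫ g(y) V h(y) dy`, where
`V h(y) = ∫_{x<y} e^{c(y-x)} h(x) dx` is `expVolterra c h y`. Integrating by parts in `x`, with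
the boundary term at `-∞` vanishing, gives `V h'(y) = h(y) + c V h(y)`; integrating against `g`
and solving for `∫ g V h` gives the identity.
-/

open MeasureTheory Set Filter Topology

lemma norm_cexp_mul_sub_le_one {c : ℂ} (hc : c.re ≤ 0) {x y : ℝ} (hxy : x ≤ y) :
    ‖Complex.exp (c * ((y : ℂ) - x))‖ ≤ 1 := by
  rw [← Complex.ofReal_sub, Complex.norm_exp, Complex.re_mul_ofReal, Real.exp_le_one_iff]
  exact mul_nonpos_of_nonpos_of_nonneg hc (sub_nonneg.2 hxy)

lemma hasDerivAt_cexp_mul_sub (c : ℂ) (y x : ℝ) :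
    HasDerivAt (fun x : ℝ ↦ Complex.exp (c * ((y : ℂ) - x)))
      (-c * Complex.exp (c * ((y : ℂ) - x))) x := by
  have h_coe : HasDerivAt (fun t : ℝ ↦ (t : ℂ)) 1 x := (hasDerivAt_id x).ofReal_comp
  have h_lin : HasDerivAt (fun t : ℝ ↦ c * ((y : ℂ) - t)) (-c) x := by
    simpa using (h_coe.const_sub (y : ℂ)).const_mul c
  exact h_lin.cexp.congr_deriv (mul_comm _ _)

lemma indicator_fst_lt_snd_apply {E : Type*} [Zero E] (f : ℝ × ℝ → E) (x y : ℝ) :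
    {p : ℝ × ℝ | p.1 < p.2}.indicator f (x, y) = (Iio y).indicator (fun x ↦ f (x, y)) x := by
  by_cases hxy : x < y <;> simp [hxy]

lemma measurableSet_fst_lt_snd : MeasurableSet {p : ℝ × ℝ | p.1 < p.2} :=
  measurableSet_lt measurable_fst measurable_snd

section Fubini

variable {E : Type*} [NormedAddCommGroup E] [NormedSpace ℝ E]

lemma integrable_setIntegral_Iio_of_integrableOn_fst_lt_snd {f : ℝ × ℝ → E}
    (hf : IntegrableOn f {p : ℝ × ℝ | p.1 < p.2}) :
    Integrable (fun y ↦ ∫ x in Iio y, f (x, y)) := by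
  rw [← integrable_indicator_iff measurableSet_fst_lt_snd, Measure.volume_eq_prod] at hf
  refine hf.integral_prod_right.congr (ae_of_all _ fun y ↦ ?_)
  simp only [indicator_fst_lt_snd_apply, integral_indicator measurableSet_Iio]

lemma setIntegral_fst_lt_snd {f : ℝ × ℝ → E} (hf : IntegrableOn f {p : ℝ × ℝ | p.1 < p.2}) :
    ∫ p in {p : ℝ × ℝ | p.1 < p.2}, f p = ∫ y, ∫ x in Iio y, f (x, y) := by
  rw [← integrable_indicator_iff measurableSet_fst_lt_snd, Measure.volume_eq_prod] at hf
  rw [← integral_indicator measurableSet_fst_lt_snd, Measure.volume_eq_prod,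
    integral_prod_symm _ hf]
  simp only [indicator_fst_lt_snd_apply, integral_indicator measurableSet_Iio]

end Fubini

noncomputable def expVolterra (c : ℂ) (v : ℝ → ℂ) (y : ℝ) : ℂ :=
  ∫ x in Iio y, Complex.exp (c * ((y : ℂ) - x)) * v x

section Kernel

variable {c : ℂ} {u v : ℝ → ℂ}

lemma integrableOn_cexp_mul_sub_mul (hc : c.re ≤ 0) (hv : Integrable v) (y : ℝ) :
    IntegrableOn (fun x : ℝ ↦ Complex.exp (c * ((y : ℂ) - x)) * v x) (Iic y) := by
  refine hv.restrict.bdd_mul (c := 1) (by fun_prop) ?_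
  filter_upwards [self_mem_ae_restrict measurableSet_Iic] with x hx
  exact norm_cexp_mul_sub_le_one hc hx

lemma integrableOn_fst_lt_snd_cexp_mul (hc : c.re ≤ 0) (hu : Integrable u) (hv : Integrable v) :
    IntegrableOn (fun p : ℝ × ℝ ↦ Complex.exp (c * ((p.2 : ℂ) - p.1)) * u p.2 * v p.1)
      {p : ℝ × ℝ | p.1 < p.2} := by
  have huv : Integrable (fun p : ℝ × ℝ ↦ v p.1 * u p.2) := by
    rw [Measure.volume_eq_prod]; exact hv.mul_prod hu
  refine (huv.restrict.bdd_mul (c := 1)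
    (f := fun p : ℝ × ℝ ↦ Complex.exp (c * ((p.2 : ℂ) - p.1))) (by fun_prop) ?_).congr
    (ae_of_all _ fun p ↦ by ring)
  filter_upwards [self_mem_ae_restrict measurableSet_fst_lt_snd] with p hp
  exact norm_cexp_mul_sub_le_one hc (le_of_lt hp)

lemma setIntegral_Iio_cexp_mul (u v : ℝ → ℂ) (y : ℝ) :
    ∫ x in Iio y, Complex.exp (c * ((y : ℂ) - x)) * u y * v x = u y * expVolterra c v y := by
  rw [expVolterra, ← integral_const_mul]
  congr 1 with x
  ring

lemma setIntegral_fst_lt_snd_cexp_mul (hc : c.re ≤ 0) (hu : Integrable u) (hv : Integrable v) :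
    ∫ p in {p : ℝ × ℝ | p.1 < p.2}, Complex.exp (c * ((p.2 : ℂ) - p.1)) * u p.2 * v p.1 =
      ∫ y, u y * expVolterra c v y := by
  simp only [setIntegral_fst_lt_snd (integrableOn_fst_lt_snd_cexp_mul hc hu hv),
    setIntegral_Iio_cexp_mul]

lemma integrable_mul_expVolterra (hc : c.re ≤ 0) (hu : Integrable u) (hv : Integrable v) :
    Integrable (fun y ↦ u y * expVolterra c v y) := by
  simpa only [setIntegral_Iio_cexp_mul] using
    integrable_setIntegral_Iio_of_integrableOn_fst_lt_snd
      (integrableOn_fst_lt_snd_cexp_mul hc hu hv)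

lemma expVolterra_of_hasDerivAt {v' : ℝ → ℂ} (hc : c.re ≤ 0)
    (hv : ∀ x, HasDerivAt v (v' x) x) (hvi : Integrable v) (hv'i : Integrable v') (y : ℝ) :
    expVolterra c v' y = v y + c * expVolterra c v y := by
  have hK := hasDerivAt_cexp_mul_sub c y
  set K : ℝ → ℂ := fun x ↦ Complex.exp (c * ((y : ℂ) - x)) with hK_def
  have hv_cont : Continuous v := continuous_iff_continuousAt.2 fun x ↦ (hv x).continuousAt
  have hK_cont : Continuous K := continuous_iff_continuousAt.2 fun x ↦ (hK x).continuousAt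
  have h_zero : Tendsto (K * v) (𝓝[<] y) (𝓝 (v y)) := by
    simpa [hK_def] using ((hK_cont.mul hv_cont).tendsto y).mono_left nhdsWithin_le_nhds
  have h_infty : Tendsto (K * v) atBot (𝓝 0) := by
    have hv_lim : Tendsto v atBot (𝓝 0) :=
      tendsto_zero_of_hasDerivAt_of_integrableOn_Iic (a := y) (fun x _ ↦ hv x)
        hv'i.integrableOn hvi.integrableOn
    refine squeeze_zero_norm' ?_ (tendsto_norm_zero.comp hv_lim)
    filter_upwards [Iic_mem_atBot y] with x hx
    rw [Pi.mul_apply, norm_mul]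
    exact mul_le_of_le_one_left (norm_nonneg _) (norm_cexp_mul_sub_le_one hc hx)
  have hKv' : IntegrableOn (K * v') (Iic y) := integrableOn_cexp_mul_sub_mul hc hv'i y
  have hK'v : IntegrableOn ((fun x ↦ -c * K x) * v) (Iic y) := by
    simp only [hK_def, Pi.mul_def, mul_assoc]
    exact (integrableOn_cexp_mul_sub_mul hc hvi y).const_mul (-c)
  have hparts := integral_Iic_mul_deriv_eq_deriv_mul (fun x _ ↦ hK x) (fun x _ ↦ hv x)
    hKv' hK'v h_zero h_infty
  simp only [mul_assoc, integral_const_mul, integral_Iic_eq_integral_Iio] at hparts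
  rw [expVolterra, expVolterra, hparts]
  ring

lemma integral_mul_expVolterra_of_hasDerivAt {v' : ℝ → ℂ} (hc : c.re ≤ 0) (hu : Integrable u)
    (huv : Integrable (fun y ↦ u y * v y)) (hv : ∀ x, HasDerivAt v (v' x) x) (hvi : Integrable v)
    (hv'i : Integrable v') :
    ∫ y, u y * expVolterra c v' y = (∫ y, u y * v y) + c * ∫ y, u y * expVolterra c v y := by
  simp only [expVolterra_of_hasDerivAt hc hv hvi hv'i, mul_add, mul_left_comm (u _) c]
  rw [integral_add huv ((integrable_mul_expVolterra hc hu hvi).const_mul c), integral_const_mul]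

end Kernel

theorem stmt_14 (z : ℂ) (hz : 0 < z.im) (g h : SchwartzMap ℝ ℂ) :
    ∫ p in {p : ℝ × ℝ | p.1 < p.2},
        Complex.exp (2 * Complex.I * z * ((p.2 : ℂ) - (p.1 : ℂ))) * g p.2 * h p.1 =
      Complex.I / (2 * z) *
        ((∫ x : ℝ, g x * h x) -
          ∫ p in {p : ℝ × ℝ | p.1 < p.2},
            Complex.exp (2 * Complex.I * z * ((p.2 : ℂ) - (p.1 : ℂ))) * g p.2 *
              deriv (⇑h) p.1) := by
  have hz0 : z ≠ 0 := by rintro rfl; simp at hz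
  have hc : (2 * Complex.I * z).re ≤ 0 := by simp; linarith
  have hh : ∀ x, HasDerivAt h (deriv h x) x := fun x ↦ h.differentiableAt.hasDerivAt
  have hh' : Integrable (deriv h) := by
    rw [← funext (SchwartzMap.derivCLM_apply ℝ h)]
    exact (SchwartzMap.derivCLM ℝ ℂ h).integrable
  have hgh : Integrable (fun x ↦ g x * h x) :=
    h.integrable.bdd_mul g.continuous.aestronglyMeasurable
      (ae_of_all _ fun x ↦ g.norm_le_seminorm ℝ x)
  rw [setIntegral_fst_lt_snd_cexp_mul hc g.integrable h.integrable,
    setIntegral_fst_lt_snd_cexp_mul hc g.integrable hh',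
    integral_mul_expVolterra_of_hasDerivAt hc g.integrable hgh hh h.integrable hh']
  rw [sub_add_cancel_left]
  field_simp
  linear_combination (∫ y, g y * expVolterra (2 * Complex.I * z) h y) * Complex.I_sq
end
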